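/- Soundness and completeness for quasi-NDMs: A formula φ ∈ L is derivable in the logic LDA if and only if φ is valid for the class of quasi-notional doxastic models (equivalently: φ is LDA-consistent if and only if φ is satisfiable for the class of quasi-NDMs). -/

import Mathlib

/-! Soundness is an induction on derivations: D holds because of seriality (C2) and Int because
of (C1*). For completeness, the canonical model of maximal LDA-consistent sets is a quasi-NDM:
(C1*) holds because Int moves every explicit belief `△ᵢα ∈ w` under `□ᵢ`, and (C2) because D
excludes `□ᵢ⊥ ∈ w`. The truth lemma follows from Lindenbaum's lemma together with K in the form
`⊢ ⋀l → φ` implies `⊢ ⋀□ᵢl → □ᵢφ`. -/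

namespace LDAPaper

/-- Formulas over atomic propositions `ℕ` and agents `Agt`.
`expbel i α` is the explicit belief operator `△ᵢ α`; `impbel i φ` is the implicit
belief operator `□ᵢ φ`. -/
inductive Frm (Agt : Type) : Type
  | atom : ℕ → Frm Agt
  | neg : Frm Agt → Frm Agt
  | and : Frm Agt → Frm Agt → Frm Agt
  | expbel : Agt → Frm Agt → Frm Agt
  | impbel : Agt → Frm Agt → Frm Agt

namespace Frm

variable {Agt : Type}

/-- Membership in the sublanguage `L0` (no implicit-belief operator). -/
def isL0 : Frm Agt → Prop
  | atom _ => True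
  | neg α => isL0 α
  | and α β => isL0 α ∧ isL0 β
  | expbel _ α => isL0 α
  | impbel _ _ => False

/-- Membership in the language `L`: the explicit belief operator applies only to
`L0`-formulas. -/
def isL : Frm Agt → Prop
  | atom _ => True
  | neg φ => isL φ
  | and φ ψ => isL φ ∧ isL ψ
  | expbel _ α => isL0 α
  | impbel _ φ => isL φ

/-- Material implication, defined from `¬` and `∧` as usual. -/
def imp (φ ψ : Frm Agt) : Frm Agt := neg (and φ (neg ψ))

/-- Disjunction, defined from `¬` and `∧` as usual. -/
def or (φ ψ : Frm Agt) : Frm Agt := neg (and (neg φ) (neg ψ))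

/-- Biconditional, defined from `¬` and `∧` as usual. -/
def iff (φ ψ : Frm Agt) : Frm Agt := and (imp φ ψ) (imp ψ φ)

/-- The set of atomic propositions occurring in a formula. -/
def atomsOf : Frm Agt → Set ℕ
  | atom p => {p}
  | neg φ => atomsOf φ
  | and φ ψ => atomsOf φ ∪ atomsOf ψ
  | expbel _ φ => atomsOf φ
  | impbel _ φ => atomsOf φ

end Frm

/-- A model `(W, D, N, V)`: worlds, doxastic function, notional function, valuation. -/
structure PreNDM (Agt : Type) where
  W : Type
  D : Agt → W → Set (Frm Agt)
  N : Agt → W → Set W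
  V : ℕ → Set W

namespace PreNDM

variable {Agt : Type}

/-- Truth of a formula at a world of a model. -/
def sat (M : PreNDM Agt) : M.W → Frm Agt → Prop
  | w, .atom p => w ∈ M.V p
  | w, .neg φ => ¬ sat M w φ
  | w, .and φ ψ => sat M w φ ∧ sat M w ψ
  | w, .expbel i α => α ∈ M.D i w
  | w, .impbel i φ => ∀ v ∈ M.N i w, sat M v φ

end PreNDM

/-- Quasi-notional doxastic model: belief bases consist of `L0`-formulas,
(C1*) `N(i,w) ⊆ ∩_{α ∈ D(i,w)} ‖α‖`, and (C2) `N(i,w) ≠ ∅`. -/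
def isQNDM {Agt : Type} (M : PreNDM Agt) : Prop :=
  (∀ i w, ∀ α ∈ M.D i w, α.isL0) ∧
  (∀ i w, ∀ v ∈ M.N i w, ∀ α ∈ M.D i w, M.sat v α) ∧
  (∀ i w, (M.N i w).Nonempty)

/-- Notional doxastic model: belief bases consist of `L0`-formulas,
(C1) `N(i,w) = ∩_{α ∈ D(i,w)} ‖α‖`, and (C2) `N(i,w) ≠ ∅`. -/
def isNDM {Agt : Type} (M : PreNDM Agt) : Prop :=
  (∀ i w, ∀ α ∈ M.D i w, α.isL0) ∧
  (∀ i w, M.N i w = {v | ∀ α ∈ M.D i w, M.sat v α}) ∧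
  (∀ i w, (M.N i w).Nonempty)

/-- A model is finite iff `W` is finite and every `D(i,w)` and every
`{p ∈ Atm : w ∈ V(p)}` is finite. -/
def finiteModel {Agt : Type} (M : PreNDM Agt) : Prop :=
  Finite M.W ∧ (∀ i w, (M.D i w).Finite) ∧ (∀ w, {p : ℕ | w ∈ M.V p}.Finite)

end LDAPaper
namespace LDAPaper

/-- A multi-agent belief base `B = (B_1,…,B_n, V)`. -/
structure MABase (Agt : Type) where
  B : Agt → Set (Frm Agt)
  V : Set ℕ

namespace MABase

variable {Agt : Type}

/-- Satisfaction of `L0`-formulas by a multi-agent belief base. -/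
def bsat (b : MABase Agt) : Frm Agt → Prop
  | .atom p => p ∈ b.V
  | .neg α => ¬ bsat b α
  | .and α β => bsat b α ∧ bsat b β
  | .expbel i α => α ∈ b.B i
  | .impbel _ _ => True

/-- Well-formedness: each agent's belief base consists of `L0`-formulas. -/
def wf (b : MABase Agt) : Prop := ∀ i, ∀ α ∈ b.B i, α.isL0

/-- Doxastic alternative relation: `b R_i b'` iff `b'` satisfies every formula in
agent `i`'s belief base in `b`. -/
def R (i : Agt) (b b' : MABase Agt) : Prop := ∀ α ∈ b.B i, bsat b' α

end MABase

/-- Satisfaction of `L`-formulas by a multi-agent belief model `(b, Cxt)`. -/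
def msat {Agt : Type} (Cxt : Set (MABase Agt)) : MABase Agt → Frm Agt → Prop
  | b, .atom p => p ∈ b.V
  | b, .neg φ => ¬ msat Cxt b φ
  | b, .and φ ψ => msat Cxt b φ ∧ msat Cxt b ψ
  | b, .expbel i α => α ∈ b.B i
  | b, .impbel i φ => ∀ b' ∈ Cxt, MABase.R i b b' → msat Cxt b' φ

/-- Consistent multi-agent belief model: all bases involved are well formed and
for every agent `i` and every `b' ∈ Cxt ∪ {b}` there is `b'' ∈ Cxt` with `b' R_i b''`. -/
def isCMAB {Agt : Type} (b : MABase Agt) (Cxt : Set (MABase Agt)) : Prop :=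
  (∀ b' ∈ insert b Cxt, b'.wf) ∧
  (∀ i : Agt, ∀ b' ∈ insert b Cxt, ∃ b'' ∈ Cxt, MABase.R i b' b'')

/-- Boolean evaluation of a formula, treating atoms, explicit-belief formulas and
implicit-belief formulas as propositional atoms. -/
def boolEval {Agt : Type} (v : Frm Agt → Bool) : Frm Agt → Bool
  | .neg φ => ! boolEval v φ
  | .and φ ψ => boolEval v φ && boolEval v ψ
  | φ => v φ

/-- Instances of classical propositional tautologies. -/
def Tautology {Agt : Type} (φ : Frm Agt) : Prop :=
  ∀ v : Frm Agt → Bool, boolEval v φ = true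

/-- Derivability in the logic LDA: classical propositional logic over `L` plus
axioms K, D, Int and the necessitation rule for implicit belief. -/
inductive LDA {Agt : Type} : Frm Agt → Prop
  | taut {φ : Frm Agt} : φ.isL → Tautology φ → LDA φ
  | axK (i : Agt) {φ ψ : Frm Agt} : φ.isL → ψ.isL →
      LDA (((Frm.impbel i φ).and (Frm.impbel i (φ.imp ψ))).imp (Frm.impbel i ψ))
  | axD (i : Agt) {φ : Frm Agt} : φ.isL →
      LDA (Frm.neg ((Frm.impbel i φ).and (Frm.impbel i (Frm.neg φ))))
  | axInt (i : Agt) {α : Frm Agt} : α.isL0 →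
      LDA ((Frm.expbel i α).imp (Frm.impbel i α))
  | mp {φ ψ : Frm Agt} : LDA (φ.imp ψ) → LDA φ → LDA ψ
  | nec (i : Agt) {φ : Frm Agt} : LDA φ → LDA (Frm.impbel i φ)

/-- Conjunction of a list of formulas (the empty conjunction is a tautology). -/
def conjList {Agt : Type} : List (Frm Agt) → Frm Agt
  | [] => Frm.neg ((Frm.atom 0).and (Frm.neg (Frm.atom 0)))
  | φ :: l => φ.and (conjList l)

/-- A set of formulas is LDA-consistent iff no contradiction is derivable in LDA
from finitely many of its members. -/
def Consistent {Agt : Type} (Δ : Set (Frm Agt)) : Prop :=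
  ∀ l : List (Frm Agt), (∀ ψ ∈ l, ψ ∈ Δ) → ¬ LDA (Frm.neg (conjList l))

/-- Maximally LDA-consistent set of `L`-formulas. -/
def MCS {Agt : Type} (Γ : Set (Frm Agt)) : Prop :=
  (∀ φ ∈ Γ, φ.isL) ∧ Consistent Γ ∧
    ∀ Δ : Set (Frm Agt), (∀ φ ∈ Δ, φ.isL) → Consistent Δ → Γ ⊆ Δ → Δ = Γ

/-- Canonical doxastic function: `α ∈ D^c(i,w)` iff `△ᵢα ∈ w`. -/
def canonD {Agt : Type} (i : Agt) (w : {Γ : Set (Frm Agt) // MCS Γ}) : Set (Frm Agt) :=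
  {α | Frm.expbel i α ∈ w.val}

/-- Canonical notional function: `v ∈ N^c(i,w)` iff `□ᵢφ ∈ w` implies `φ ∈ v`. -/
def canonN {Agt : Type} (i : Agt) (w : {Γ : Set (Frm Agt) // MCS Γ}) :
    Set {Γ : Set (Frm Agt) // MCS Γ} :=
  {v | ∀ φ : Frm Agt, Frm.impbel i φ ∈ w.val → φ ∈ v.val}

/-- Canonical valuation: `w ∈ V^c(p)` iff `p ∈ w`. -/
def canonV {Agt : Type} (p : ℕ) : Set {Γ : Set (Frm Agt) // MCS Γ} :=
  {w | Frm.atom p ∈ w.val}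

/-- The canonical model of LDA: worlds are the maximally LDA-consistent sets. -/
def canonM (Agt : Type) : PreNDM Agt where
  W := {Γ : Set (Frm Agt) // MCS Γ}
  D := canonD
  N := canonN
  V := canonV

/-- `w ≡_Σ v` iff `w` and `v` satisfy the same formulas of `Σ`. -/
def filtRel {Agt : Type} (M : PreNDM Agt) (S : Set (Frm Agt)) (w v : M.W) : Prop :=
  ∀ φ ∈ S, (M.sat w φ ↔ M.sat v φ)

/-- The setoid of `≡_Σ`-equivalent worlds. -/
def filtSetoid {Agt : Type} (M : PreNDM Agt) (S : Set (Frm Agt)) : Setoid M.W where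
  r := filtRel M S
  iseqv := ⟨fun _ _ _ => Iff.rfl, fun h φ hφ => (h φ hφ).symm,
    fun h1 h2 φ hφ => (h1 φ hφ).trans (h2 φ hφ)⟩

/-- The `≡_Σ`-equivalence class `|w|_Σ` of a world `w`. -/
def filtMk {Agt : Type} (M : PreNDM Agt) (S : Set (Frm Agt)) (w : M.W) :
    Quotient (filtSetoid M S) :=
  Quotient.mk (filtSetoid M S) w

/-- Closure under subformulas. -/
def SubClosed {Agt : Type} (S : Set (Frm Agt)) : Prop :=
  (∀ φ : Frm Agt, Frm.neg φ ∈ S → φ ∈ S) ∧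
  (∀ φ ψ : Frm Agt, Frm.and φ ψ ∈ S → φ ∈ S ∧ ψ ∈ S) ∧
  (∀ (i : Agt) (φ : Frm Agt), Frm.expbel i φ ∈ S → φ ∈ S) ∧
  (∀ (i : Agt) (φ : Frm Agt), Frm.impbel i φ ∈ S → φ ∈ S)

/-- The filtration `M_Σ = (W_Σ, D_Σ, N_Σ, V_Σ)` of `M` through `Σ`:
`W_Σ` is the quotient of `W` by `≡_Σ`;
`D_Σ(i,|w|) = (∩_{v ∈ |w|} D(i,v)) ∩ Σ`;
`N_Σ(i,|w|) = {|v| : v ∈ N(i,w)}` (smallest filtration);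
`V_Σ(p) = {|w| : (M,w) ⊨ p}` if `p` occurs in `Σ`, and `∅` otherwise. -/
def filtModel {Agt : Type} (M : PreNDM Agt) (S : Set (Frm Agt)) : PreNDM Agt where
  W := Quotient (filtSetoid M S)
  D := fun i x => {α | α ∈ S ∧ ∀ v : M.W, filtMk M S v = x → α ∈ M.D i v}
  N := fun i x => {y | ∃ w v : M.W, filtMk M S w = x ∧ filtMk M S v = y ∧ v ∈ M.N i w}
  V := fun p =>
    {x | (∃ φ ∈ S, p ∈ φ.atomsOf) ∧ ∃ w : M.W, filtMk M S w = x ∧ M.sat w (Frm.atom p)}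

/-- The language of Fagin & Halpern's logic of general awareness:
`bel` is implicit belief `B_i`, `aware` is awareness `A_i`, `expk` is explicit
belief `X_i`. -/
inductive LGA (Agt : Type) : Type
  | atom : ℕ → LGA Agt
  | neg : LGA Agt → LGA Agt
  | and : LGA Agt → LGA Agt → LGA Agt
  | bel : Agt → LGA Agt → LGA Agt
  | aware : Agt → LGA Agt → LGA Agt
  | expk : Agt → LGA Agt → LGA Agt

/-- An awareness structure `(S, R_1,…,R_n, A_1,…,A_n, π)`. -/
structure AwStruct (Agt : Type) where
  S : Type
  R : Agt → S → S → Prop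
  A : Agt → S → Set (LGA Agt)
  val : ℕ → Set S

namespace AwStruct

variable {Agt : Type}

/-- Truth in an awareness structure; `X_i φ` holds iff both `B_i φ` and `A_i φ` hold. -/
def sat (M : AwStruct Agt) : M.S → LGA Agt → Prop
  | s, .atom p => s ∈ M.val p
  | s, .neg φ => ¬ sat M s φ
  | s, .and φ ψ => sat M s φ ∧ sat M s ψ
  | s, .bel i φ => ∀ t, M.R i s t → sat M t φ
  | s, .aware i φ => φ ∈ M.A i s
  | s, .expk i φ => (∀ t, M.R i s t → sat M t φ) ∧ φ ∈ M.A i s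

/-- An awareness structure is serial iff every `R_i` is serial. -/
def serial (M : AwStruct Agt) : Prop := ∀ i s, ∃ t, M.R i s t

end AwStruct

/-- The translation `tr` from `L` to the language of general awareness. -/
def tr {Agt : Type} : Frm Agt → LGA Agt
  | .atom p => .atom p
  | .neg φ => .neg (tr φ)
  | .and φ ψ => .and (tr φ) (tr ψ)
  | .expbel i α => .expk i (tr α)
  | .impbel i φ => .bel i (tr φ)

end LDAPaper

namespace LDAPaper

section Completeness

variable {Agt : Type}

namespace Frm

@[simp] lemma isL_neg {φ : Frm Agt} : (neg φ).isL ↔ φ.isL := Iff.rfl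

@[simp] lemma isL_and {φ ψ : Frm Agt} : (and φ ψ).isL ↔ φ.isL ∧ ψ.isL := Iff.rfl

@[simp] lemma isL_imp {φ ψ : Frm Agt} : (imp φ ψ).isL ↔ φ.isL ∧ ψ.isL := Iff.rfl

@[simp] lemma isL_impbel {i : Agt} {φ : Frm Agt} : (impbel i φ).isL ↔ φ.isL := Iff.rfl

@[simp] lemma isL_expbel {i : Agt} {α : Frm Agt} : (expbel i α).isL ↔ α.isL0 := Iff.rfl

lemma isL0.isL : ∀ {α : Frm Agt}, α.isL0 → α.isL
  | atom _, _ => trivial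
  | neg α, h => isL0.isL (α := α) h
  | and α β, h => ⟨isL0.isL (α := α) h.1, isL0.isL (α := β) h.2⟩
  | expbel _ _, h => h
  | impbel _ _, h => h.elim

end Frm

@[simp] lemma isL_conjList {l : List (Frm Agt)} : (conjList l).isL ↔ ∀ φ ∈ l, φ.isL := by
  induction l with
  | nil => simp [conjList, Frm.isL]
  | cons φ l ih => simp [conjList, ih]

section Tautology

variable (v : Frm Agt → Bool)

@[simp] lemma boolEval_neg {φ : Frm Agt} :
    boolEval v (.neg φ) = true ↔ ¬ boolEval v φ = true := by
  simp [boolEval]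

@[simp] lemma boolEval_and {φ ψ : Frm Agt} :
    boolEval v (.and φ ψ) = true ↔ boolEval v φ = true ∧ boolEval v ψ = true := by
  simp [boolEval]

@[simp] lemma boolEval_imp {φ ψ : Frm Agt} :
    boolEval v (φ.imp ψ) = true ↔ (boolEval v φ = true → boolEval v ψ = true) := by
  simp [Frm.imp]

@[simp] lemma boolEval_conjList {l : List (Frm Agt)} :
    boolEval v (conjList l) = true ↔ ∀ φ ∈ l, boolEval v φ = true := by
  induction l with
  | nil => simp [conjList]
  | cons φ l ih => simp [conjList, ih]

end Tautology

lemma LDA.isL {φ : Frm Agt} (h : LDA φ) : φ.isL := by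
  induction h with
  | taut hφ _ => exact hφ
  | axK _ hφ hψ => simp [hφ, hψ]
  | axD _ hφ => simp [hφ]
  | axInt _ hα => simp [hα, hα.isL]
  | mp _ _ ih _ => exact (Frm.isL_imp.mp ih).2
  | nec _ _ ih => exact ih

lemma LDA.of_tautology {l : List (Frm Agt)} {ψ : Frm Agt} (hl : ∀ χ ∈ l, LDA χ)
    (ht : Tautology ((conjList l).imp ψ)) (hψ : ψ.isL) : LDA ψ := by
  induction l generalizing ψ with
  | nil => exact LDA.taut hψ fun v => by simpa using ht v
  | cons χ l ih =>
    have hχ := hl χ (by simp)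
    refine LDA.mp (ih (fun χ' h => hl χ' (by simp [h])) (fun v => ?_) (by simp [hχ.isL, hψ])) hχ
    have := ht v
    simp_all

namespace PreNDM

variable {M : PreNDM Agt}

@[simp] lemma sat_neg {w : M.W} {φ : Frm Agt} : M.sat w (.neg φ) ↔ ¬ M.sat w φ := Iff.rfl

@[simp] lemma sat_and {w : M.W} {φ ψ : Frm Agt} :
    M.sat w (.and φ ψ) ↔ M.sat w φ ∧ M.sat w ψ := Iff.rfl

@[simp] lemma sat_imp {w : M.W} {φ ψ : Frm Agt} :
    M.sat w (φ.imp ψ) ↔ (M.sat w φ → M.sat w ψ) := by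
  simp [Frm.imp]

@[simp] lemma sat_impbel {w : M.W} {i : Agt} {φ : Frm Agt} :
    M.sat w (.impbel i φ) ↔ ∀ v ∈ M.N i w, M.sat v φ := Iff.rfl

lemma boolEval_sat_iff (w : M.W) (φ : Frm Agt) :
    boolEval (fun ψ => @decide (M.sat w ψ) (Classical.dec _)) φ = true ↔ M.sat w φ := by
  induction φ with
  | neg φ ih => simp [ih]
  | and φ ψ ih₁ ih₂ => simp [ih₁, ih₂]
  | _ => exact @decide_eq_true_iff _ (Classical.dec _)

lemma sat_of_tautology {φ : Frm Agt} (h : Tautology φ) (w : M.W) : M.sat w φ :=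
  (boolEval_sat_iff w φ).mp (h _)

end PreNDM

open PreNDM in
theorem LDA.sound {φ : Frm Agt} (h : LDA φ) {M : PreNDM Agt} (hM : isQNDM M) (w : M.W) :
    M.sat w φ := by
  induction h generalizing w with
  | taut _ ht => exact sat_of_tautology ht w
  | axK => simp only [sat_imp, sat_and, sat_impbel]; exact fun h v hv => h.2 v hv (h.1 v hv)
  | axD i =>
    simp only [sat_neg, sat_and, sat_impbel, not_and]
    obtain ⟨v, hv⟩ := hM.2.2 i w
    exact fun h₁ h₂ => h₂ v hv (h₁ v hv)
  | axInt i => exact sat_imp.mpr fun hα v hv => hM.2.1 i w v hv _ hα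
  | mp _ _ ih₁ ih₂ => exact sat_imp.mp (ih₁ w) (ih₂ w)
  | nec _ _ ih => exact fun v _ => ih v

lemma exists_derives_neg_of_not_consistent_insert {Δ : Set (Frm Agt)} {φ : Frm Agt}
    (hφ : φ.isL) (h : ¬ Consistent (insert φ Δ)) :
    ∃ l : List (Frm Agt), (∀ ψ ∈ l, ψ ∈ Δ) ∧ LDA ((conjList l).imp (.neg φ)) := by
  classical
  simp only [Consistent, not_forall, not_not] at h
  obtain ⟨l, hl, hd⟩ := h
  have hlL : ∀ ψ ∈ l, ψ.isL := by simpa using hd.isL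
  refine ⟨l.filter (· ≠ φ), fun ψ hψ => ?_, LDA.of_tautology (l := [_]) (by simpa using hd)
    (fun v => ?_) (by simp_all)⟩
  · simp only [List.mem_filter, decide_eq_true_eq] at hψ
    exact (hl ψ hψ.1).resolve_left hψ.2
  · simp only [boolEval_imp, boolEval_conjList, List.mem_singleton, forall_eq, boolEval_neg,
      List.mem_filter, decide_eq_true_eq, and_imp]
    intro hneg hrest hφv
    exact hneg fun ψ hψ => if e : ψ = φ then e ▸ hφv else hrest ψ hψ e

lemma LDA.conjList_map_impbel_imp (i : Agt) {l : List (Frm Agt)} {φ : Frm Agt}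
    (h : LDA ((conjList l).imp φ)) :
    LDA ((conjList (l.map (.impbel i))).imp (.impbel i φ)) := by
  induction l generalizing φ with
  | nil =>
    have hφ : LDA φ := LDA.of_tautology (l := [_]) (by simpa using h)
      (fun v => by simp [conjList]) (Frm.isL_imp.mp h.isL).2
    exact LDA.of_tautology (l := [_]) (by simpa using LDA.nec i hφ) (fun v => by simp)
      (by simp [conjList, Frm.isL, hφ.isL])
  | cons χ l ih =>
    obtain ⟨⟨hχ, hl⟩, hφ⟩ : (χ.isL ∧ ∀ ψ ∈ l, ψ.isL) ∧ φ.isL := by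
      simpa [conjList] using h.isL
    have hχl : LDA ((conjList l).imp (χ.imp φ)) :=
      LDA.of_tautology (l := [_]) (by simpa using h) (fun v => by simp [conjList]; tauto)
        (by simpa [hχ, hφ] using hl)
    exact LDA.of_tautology (l := [_, _]) (by simpa using And.intro (ih hχl) (LDA.axK i hχ hφ))
      (fun v => by simp [conjList]; tauto) (by simpa [conjList, hχ, hφ] using hl)

-- `conjList []` is the verum `⊤`, so this is `¬□ᵢ⊥`.
lemma LDA.neg_impbel_neg_top (i : Agt) :
    LDA (.neg (.impbel i (.neg (conjList ([] : List (Frm Agt)))))) := by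
  have htop : LDA (conjList ([] : List (Frm Agt))) :=
    LDA.taut (by simp [conjList, Frm.isL]) fun v => by simp [conjList]
  exact LDA.of_tautology (l := [_, _])
    (by simpa using And.intro (LDA.axD i htop.isL) (LDA.nec i htop))
    (fun v => by simp [conjList]) (by simp [htop.isL])

namespace MCS

variable {Γ : Set (Frm Agt)} (hΓ : MCS Γ)
include hΓ

lemma not_consistent_insert {φ : Frm Agt} (hφ : φ.isL) (h : φ ∉ Γ) :
    ¬ Consistent (insert φ Γ) := fun hc =>
  h (hΓ.2.2 _ (by rintro ψ (rfl | hψ) <;> [exact hφ; exact hΓ.1 ψ hψ]) hc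
    (Set.subset_insert φ Γ) ▸ Set.mem_insert φ Γ)

lemma mem_of_derives {l : List (Frm Agt)} (hl : ∀ φ ∈ l, φ ∈ Γ) {ψ : Frm Agt}
    (h : LDA ((conjList l).imp ψ)) : ψ ∈ Γ := by
  by_contra hψ
  have hψL : ψ.isL := (Frm.isL_imp.mp h.isL).2
  obtain ⟨l', hl', h'⟩ :=
    exists_derives_neg_of_not_consistent_insert hψL (hΓ.not_consistent_insert hψL hψ)
  have hmem : ∀ φ ∈ l ++ l', φ ∈ Γ := fun φ hφ => (List.mem_append.mp hφ).elim (hl φ) (hl' φ)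
  refine hΓ.2.1 (l ++ l') hmem ?_
  refine LDA.of_tautology (l := [_, _]) (by simpa using And.intro h h') (fun v => ?_) ?_
  · simp only [boolEval_imp, boolEval_conjList, boolEval_neg, List.mem_cons, List.mem_append,
      List.not_mem_nil, or_false, forall_eq, or_imp, forall_and]
    tauto
  · simpa using fun φ hφ => hΓ.1 φ (hmem φ hφ)

lemma mem_of_LDA {φ : Frm Agt} (h : LDA φ) : φ ∈ Γ :=
  hΓ.mem_of_derives (l := []) (by simp)
    (LDA.of_tautology (l := [_]) (by simpa using h) (fun v => by simp)
      (by simp [conjList, Frm.isL, h.isL]))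

lemma mem_of_tautology {l : List (Frm Agt)} (hl : ∀ φ ∈ l, φ ∈ Γ) {ψ : Frm Agt} (hψ : ψ.isL)
    (h : Tautology ((conjList l).imp ψ)) : ψ ∈ Γ :=
  hΓ.mem_of_derives hl (LDA.taut (by simpa [hψ] using fun φ hφ => hΓ.1 φ (hl φ hφ)) h)

lemma neg_mem_iff {φ : Frm Agt} (hφ : φ.isL) : Frm.neg φ ∈ Γ ↔ φ ∉ Γ := by
  refine ⟨fun hn hp => hΓ.2.1 [φ, .neg φ] (by simp [hp, hn]) ?_, fun h => ?_⟩
  · exact LDA.taut (by simpa using hφ) fun v => by simp [conjList]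
  · obtain ⟨l, hl, hd⟩ :=
      exists_derives_neg_of_not_consistent_insert hφ (hΓ.not_consistent_insert hφ h)
    exact hΓ.mem_of_derives hl hd

lemma and_mem_iff {φ ψ : Frm Agt} : Frm.and φ ψ ∈ Γ ↔ φ ∈ Γ ∧ ψ ∈ Γ := by
  refine ⟨fun h => ⟨?_, ?_⟩, fun h => ?_⟩
  · exact hΓ.mem_of_tautology (l := [_]) (by simpa using h) (hΓ.1 _ h).1
      fun v => by simp [conjList]; tauto
  · exact hΓ.mem_of_tautology (l := [_]) (by simpa using h) (hΓ.1 _ h).2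
      fun v => by simp [conjList]
  · exact hΓ.mem_of_tautology (l := [φ, ψ]) (by simpa using h) ⟨hΓ.1 _ h.1, hΓ.1 _ h.2⟩
      fun v => by simp [conjList]

lemma impbel_mem_of_derives {i : Agt} {l : List (Frm Agt)} (hl : ∀ ψ ∈ l, .impbel i ψ ∈ Γ)
    {φ : Frm Agt} (h : LDA ((conjList l).imp φ)) : .impbel i φ ∈ Γ :=
  hΓ.mem_of_derives (by simpa using hl) (LDA.conjList_map_impbel_imp i h)

end MCS

lemma consistent_sUnion {c : Set (Set (Frm Agt))} (hne : c.Nonempty) (hc : IsChain (· ⊆ ·) c)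
    (h : ∀ Δ ∈ c, Consistent Δ) : Consistent (⋃₀ c) := fun l hl => by
  obtain ⟨Δ, hΔ, hlΔ⟩ := hc.directedOn.exists_mem_subset_of_finite_of_subset_sUnion hne
    (List.finite_toSet l) hl
  exact h Δ hΔ l hlΔ

theorem exists_MCS_superset {Δ : Set (Frm Agt)} (hL : ∀ φ ∈ Δ, φ.isL) (hc : Consistent Δ) :
    ∃ Γ, MCS Γ ∧ Δ ⊆ Γ := by
  obtain ⟨Γ, hΔΓ, hmax⟩ := zorn_subset_nonempty {Δ' | (∀ φ ∈ Δ', φ.isL) ∧ Consistent Δ'}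
    (fun c hcS hc hne => ⟨⋃₀ c,
      ⟨fun φ ⟨Δ', hΔ', hφ⟩ => (hcS hΔ').1 φ hφ,
        consistent_sUnion hne hc fun Δ' hΔ' => (hcS hΔ').2⟩,
      fun _ => Set.subset_sUnion_of_mem⟩) Δ ⟨hL, hc⟩
  exact ⟨Γ, ⟨hmax.prop.1, hmax.prop.2,
    fun Δ' hL' hc' hsub => (hmax.eq_of_subset ⟨hL', hc'⟩ hsub).symm⟩, hΔΓ⟩

lemma MCS.exists_canonN_not_mem {Γ : Set (Frm Agt)} (hΓ : MCS Γ) {i : Agt} {φ : Frm Agt}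
    (hφ : φ.isL) (h : .impbel i φ ∉ Γ) :
    ∃ Δ, MCS Δ ∧ (∀ ψ, .impbel i ψ ∈ Γ → ψ ∈ Δ) ∧ φ ∉ Δ := by
  have hc : Consistent (insert (.neg φ) {ψ | .impbel i ψ ∈ Γ}) := by
    by_contra hc
    obtain ⟨l, hl, hd⟩ := exists_derives_neg_of_not_consistent_insert (by simpa using hφ) hc
    refine h (hΓ.impbel_mem_of_derives hl (LDA.of_tautology (l := [_]) (by simpa using hd)
      (fun v => by simp) (by simpa [hφ] using fun ψ hψ => hΓ.1 _ (hl ψ hψ))))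
  obtain ⟨Δ, hΔ, hsub⟩ := exists_MCS_superset
    (by rintro ψ (rfl | hψ) <;> [exact hφ; exact hΓ.1 (.impbel i ψ) hψ]) hc
  exact ⟨Δ, hΔ, fun ψ hψ => hsub (Set.mem_insert_of_mem _ hψ),
    (hΔ.neg_mem_iff hφ).mp (hsub (Set.mem_insert _ _))⟩

theorem sat_canonM_iff {φ : Frm Agt} (hφ : φ.isL) (w : (canonM Agt).W) :
    (canonM Agt).sat w φ ↔ φ ∈ w.1 := by
  induction φ generalizing w with
  | atom p => rfl
  | neg φ ih => rw [PreNDM.sat_neg, ih hφ]; exact (w.2.neg_mem_iff (φ := φ) hφ).symm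
  | and φ ψ ih₁ ih₂ => rw [PreNDM.sat_and, ih₁ hφ.1, ih₂ hφ.2, w.2.and_mem_iff]
  | expbel i α => rfl
  | impbel i φ ih =>
    refine ⟨fun h => ?_, fun h v hv => (ih hφ v).mpr (hv φ h)⟩
    by_contra hw
    obtain ⟨Δ, hΔ, hN, hφΔ⟩ := w.2.exists_canonN_not_mem (φ := φ) hφ hw
    exact hφΔ ((ih hφ ⟨Δ, hΔ⟩).mp (h ⟨Δ, hΔ⟩ hN))

theorem isQNDM_canonM : isQNDM (canonM Agt) := by
  refine ⟨fun i w α hα => w.2.1 _ hα, fun i w v hv α hα => ?_, fun i w => ?_⟩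
  · have hexp : Frm.expbel i α ∈ w.1 := hα
    have hα0 : α.isL0 := w.2.1 _ hexp
    have hbox : .impbel i α ∈ w.1 :=
      w.2.mem_of_tautology (l := [(Frm.expbel i α).imp (.impbel i α), .expbel i α])
        (by simpa [hexp] using w.2.mem_of_LDA (LDA.axInt i hα0)) hα0.isL
        fun v => by simp [conjList]
    exact (sat_canonM_iff hα0.isL v).mpr (hv α hbox)
  · have htop : (conjList ([] : List (Frm Agt))).isL := by simp [conjList, Frm.isL]
    obtain ⟨Δ, hΔ, hN, -⟩ := w.2.exists_canonN_not_mem (i := i) (φ := .neg (conjList []))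
      (by simp [htop]) ((w.2.neg_mem_iff (by simp [htop])).mp
        (w.2.mem_of_LDA (LDA.neg_impbel_neg_top i)))
    exact ⟨⟨Δ, hΔ⟩, hN⟩

theorem LDA.complete {φ : Frm Agt} (hφ : φ.isL)
    (h : ∀ M : PreNDM Agt, isQNDM M → ∀ w : M.W, M.sat w φ) : LDA φ := by
  by_contra hnd
  have hc : Consistent (insert (.neg φ) (∅ : Set (Frm Agt))) := by
    by_contra hc
    obtain ⟨l, hl, hd⟩ := exists_derives_neg_of_not_consistent_insert (by simpa using hφ) hc
    obtain rfl : l = [] := List.eq_nil_iff_forall_not_mem.mpr hl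
    exact hnd (LDA.of_tautology (l := [_]) (by simpa using hd) (fun v => by simp [conjList]) hφ)
  obtain ⟨Γ, hΓ, hsub⟩ := exists_MCS_superset (by simpa using hφ) hc
  exact (hΓ.neg_mem_iff hφ).mp (hsub (Set.mem_insert _ _))
    ((sat_canonM_iff hφ ⟨Γ, hΓ⟩).mp (h _ isQNDM_canonM _))

end Completeness

theorem soundness_completeness_qndm_general (Agt : Type) (φ : Frm Agt)
    (hφ : φ.isL) :
    LDA φ ↔ ∀ M : PreNDM Agt, isQNDM M → ∀ w : M.W, M.sat w φ :=
  ⟨fun h _ hM w => h.sound hM w, LDA.complete hφ⟩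

/-- **Soundness and completeness for quasi-NDMs.** A formula `φ ∈ L` is derivable
in LDA iff `φ` is valid for the class of quasi-notional doxastic models. -/
theorem soundness_completeness_qndm (Agt : Type) [Fintype Agt] (φ : Frm Agt)
    (hφ : φ.isL) :
    LDA φ ↔ ∀ M : PreNDM Agt, isQNDM M → ∀ w : M.W, M.sat w φ :=
  soundness_completeness_qndm_general Agt φ hφ

end LDAPaper
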